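/- The Jaccard distance satisfies the triangle inequality: for all finite sets A, B, C, J(A,C) ≤ J(A,B) + J(B,C). -/

import Mathlib

noncomputable def jaccard {α : Type*} [DecidableEq α] (A B : Finset α) : ℝ :=
  if A ∪ B = ∅ then 0 else 1 - ((A ∩ B).card : ℝ) / ((A ∪ B).card : ℝ)

/-!
Write `J(A, B) = |(A ∪ B) \ (A ∩ B)| / |A ∪ B|` and let `S = A ∪ B ∪ C`. Replacing the universe
`A ∪ C` by the larger `S` can only increase `J(A, C)`, to `|S \ (A ∩ C)| / |S|`. Every element of
`S \ (A ∩ C)` lies in `(A ∪ B) \ (A ∩ B)` or in `(B ∪ C) \ (B ∩ C)`, and dividing the sizes of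
these two sets by `|S|` instead of by `|A ∪ B|` and `|B ∪ C|` only makes the quotients smaller.
-/

open Finset

section

variable {α : Type*}

theorem card_div_card_le_of_subset {D U S : Finset α} (hDU : D ⊆ U) (hUS : U ⊆ S) :
    (#D : ℝ) / #S ≤ #D / #U := by
  rcases U.eq_empty_or_nonempty with rfl | hU
  · simp [subset_empty.1 hDU]
  exact div_le_div_of_nonneg_left (by positivity) (by exact_mod_cast hU.card_pos)
    (by exact_mod_cast card_le_card hUS)

variable [DecidableEq α]

-- Also when `A ∪ B = ∅`, since then the right side is `0 / 0 = 0`.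
theorem jaccard_eq_card_sdiff_div (A B : Finset α) :
    jaccard A B = (#((A ∪ B) \ (A ∩ B)) : ℝ) / #(A ∪ B) := by
  have hsub : A ∩ B ⊆ A ∪ B := inter_subset_union
  rw [jaccard, card_sdiff_of_subset hsub, Nat.cast_sub (card_le_card hsub)]
  split_ifs with h
  · simp [h]
  · have : (0 : ℝ) < #(A ∪ B) := by exact_mod_cast card_pos.2 (nonempty_iff_ne_empty.2 h)
    field_simp

theorem card_sdiff_div_card_le_of_subset {I U S : Finset α} (hIU : I ⊆ U) (hUS : U ⊆ S) :
    (#(U \ I) : ℝ) / #U ≤ #(S \ I) / #S := by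
  rcases U.eq_empty_or_nonempty with rfl | hU
  · simp only [empty_sdiff, card_empty, CharP.cast_eq_zero, div_zero]
    positivity
  have hIS := hIU.trans hUS
  have hUpos : (0 : ℝ) < #U := by exact_mod_cast hU.card_pos
  have hSpos : (0 : ℝ) < #S := by exact_mod_cast (hU.mono hUS).card_pos
  rw [card_sdiff_of_subset hIU, card_sdiff_of_subset hIS, Nat.cast_sub (card_le_card hIU),
    Nat.cast_sub (card_le_card hIS), sub_div, sub_div, div_self hUpos.ne', div_self hSpos.ne']
  gcongr

theorem union_union_sdiff_inter_subset (A B C : Finset α) :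
    (A ∪ B ∪ C) \ (A ∩ C) ⊆ (A ∪ B) \ (A ∩ B) ∪ (B ∪ C) \ (B ∩ C) := by
  intro x
  simp only [mem_sdiff, mem_union, mem_inter]
  tauto

end

theorem jaccard_triangle {α : Type*} [DecidableEq α] (A B C : Finset α) :
    jaccard A C ≤ jaccard A B + jaccard B C := by
  simp only [jaccard_eq_card_sdiff_div]
  set S := A ∪ B ∪ C
  have hAB : A ∪ B ⊆ S := subset_union_left
  have hBC : B ∪ C ⊆ S := by intro x; simp only [S, mem_union]; tauto
  have hAC : A ∪ C ⊆ S := by intro x; simp only [S, mem_union]; tauto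
  calc (#((A ∪ C) \ (A ∩ C)) : ℝ) / #(A ∪ C)
      ≤ #(S \ (A ∩ C)) / #S := card_sdiff_div_card_le_of_subset inter_subset_union hAC
    _ ≤ (#((A ∪ B) \ (A ∩ B)) + #((B ∪ C) \ (B ∩ C))) / #S := by
        gcongr
        exact_mod_cast (card_le_card (union_union_sdiff_inter_subset A B C)).trans
          (card_union_le _ _)
    _ = #((A ∪ B) \ (A ∩ B)) / #S + #((B ∪ C) \ (B ∩ C)) / #S := add_div _ _ _
    _ ≤ _ := add_le_add (card_div_card_le_of_subset sdiff_subset hAB)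
        (card_div_card_le_of_subset sdiff_subset hBC)
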